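/- arXiv:1405.6126 — 2 statements merged into one kernel-verified Lean document; each statement's English description precedes it below -/
import Mathlib

section
/- A multifunctor F: M → N between multicategories induces a 2-functor F_•: M-Cat → N-Cat on the 2-categories of enriched categories, enriched functors, and enriched natural transformations, which sends an M-enriched category C to the N-enriched category F_•C with the same objects as C and with morphism objects (F_•C)(a,b) = F(C(a,b)), with composition and identities obtained by applying F to those of C. -/
universe u v w w₁ w₂ w₃

/-- A multicategory, presented via its partial ("one input at a time") composition
operations `g ∘ᵢ f`, with unit and associativity laws. -/
structure Multicategory : Type (max (u + 1) (v + 1)) where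
  Obj : Type u
  Hom : List Obj → Obj → Type v
  id1 : ∀ a : Obj, Hom [a] a
  pcomp : ∀ {bs : List Obj} {c : Obj}, Hom bs c → ∀ (i : ℕ) (hi : i < bs.length)
      {as : List Obj}, Hom as (bs.get ⟨i, hi⟩) → Hom (bs.take i ++ as ++ bs.drop (i + 1)) c
  pcomp_id1 : ∀ {bs : List Obj} {c : Obj} (g : Hom bs c) (i : ℕ) (hi : i < bs.length),
      HEq (pcomp g i hi (id1 (bs.get ⟨i, hi⟩))) g
  id1_pcomp : ∀ {c : Obj} {as : List Obj} (f : Hom as c) (h0 : 0 < [c].length),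
      HEq (pcomp (id1 c) 0 h0 f) f
  assoc_nested : ∀ {bs : List Obj} {c : Obj} (g : Hom bs c) (i : ℕ) (hi : i < bs.length)
      {as : List Obj} (f : Hom as (bs.get ⟨i, hi⟩)) (j : ℕ) (hj : j < as.length)
      {xs : List Obj} (e : Hom xs (as.get ⟨j, hj⟩))
      (hij : i + j < (bs.take i ++ as ++ bs.drop (i + 1)).length)
      (e' : Hom xs ((bs.take i ++ as ++ bs.drop (i + 1)).get ⟨i + j, hij⟩)),
      HEq e' e →
        HEq (pcomp (pcomp g i hi f) (i + j) hij e') (pcomp g i hi (pcomp f j hj e))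
  assoc_disjoint : ∀ {bs : List Obj} {c : Obj} (g : Hom bs c) (i k : ℕ)
      (hi : i < bs.length) (hk : k < bs.length), i < k →
      ∀ {as : List Obj} (f : Hom as (bs.get ⟨i, hi⟩))
        {xs : List Obj} (e : Hom xs (bs.get ⟨k, hk⟩))
        (hk' : k - 1 + as.length < (bs.take i ++ as ++ bs.drop (i + 1)).length)
        (hi' : i < (bs.take k ++ xs ++ bs.drop (k + 1)).length)
        (e' : Hom xs ((bs.take i ++ as ++ bs.drop (i + 1)).get ⟨k - 1 + as.length, hk'⟩))
        (f' : Hom as ((bs.take k ++ xs ++ bs.drop (k + 1)).get ⟨i, hi'⟩)),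
        HEq e' e → HEq f' f →
          HEq (pcomp (pcomp g i hi f) (k - 1 + as.length) hk' e')
            (pcomp (pcomp g k hk e) i hi' f')

/-- A multifunctor between multicategories. -/
structure Multifunctor (M : Multicategory.{u, v} ) (N : Multicategory.{u, v}) :
    Type (max u v) where
  obj : M.Obj → N.Obj
  map : ∀ {as : List M.Obj} {b : M.Obj}, M.Hom as b → N.Hom (as.map obj) (obj b)
  map_id : ∀ a : M.Obj, map (M.id1 a) = N.id1 (obj a)
  map_pcomp : ∀ {bs : List M.Obj} {c : M.Obj} (g : M.Hom bs c) (i : ℕ)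
      (hi : i < bs.length) {as : List M.Obj} (f : M.Hom as (bs.get ⟨i, hi⟩))
      (hi' : i < (bs.map obj).length)
      (f' : N.Hom (as.map obj) ((bs.map obj).get ⟨i, hi'⟩)),
      HEq f' (map f) →
        HEq (map (M.pcomp g i hi f)) (N.pcomp (map g) i hi' f')

/-- The data of a category enriched in a multicategory `M`: morphism objects, a
composition 2-morphism and an identity 0-morphism. -/
structure MEnrCatData (M : Multicategory.{u, v}) (O : Type w) : Type (max u v w) where
  Hom : O → O → M.Obj
  comp : ∀ a b c : O, M.Hom [Hom b c, Hom a b] (Hom a c)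
  idm : ∀ a : O, M.Hom [] (Hom a a)

/-- The associativity and identity axioms of an `M`-enriched category. -/
structure MEnrCatData.IsEnrCat {M : Multicategory.{u, v}} {O : Type w}
    (C : MEnrCatData M O) : Prop where
  assoc : ∀ a b c d : O,
    M.pcomp (C.comp a c d) 1 (by simp) (C.comp a b c) =
      M.pcomp (C.comp a b d) 0 (by simp) (C.comp b c d)
  id_comp : ∀ a b : O,
    M.pcomp (C.comp a b b) 0 (by simp) (C.idm b) = M.id1 (C.Hom a b)
  comp_id : ∀ a b : O,
    M.pcomp (C.comp a a b) 1 (by simp) (C.idm a) = M.id1 (C.Hom a b)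

/-- The data of an `M`-enriched functor. -/
structure MEnrFunData {M : Multicategory.{u, v}} {O₁ : Type w₁} {O₂ : Type w₂}
    (C : MEnrCatData M O₁) (D : MEnrCatData M O₂) : Type (max u v w₁ w₂) where
  obj : O₁ → O₂
  fmap : ∀ a b : O₁, M.Hom [C.Hom a b] (D.Hom (obj a) (obj b))

/-- The axioms of an `M`-enriched functor. -/
structure MEnrFunData.IsEnrFun {M : Multicategory.{u, v}} {O₁ : Type w₁} {O₂ : Type w₂}
    {C : MEnrCatData M O₁} {D : MEnrCatData M O₂} (F : MEnrFunData C D) : Prop where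
  map_comp : ∀ a b c : O₁,
    M.pcomp (F.fmap a c) 0 (by simp) (C.comp a b c) =
      M.pcomp (M.pcomp (D.comp (F.obj a) (F.obj b) (F.obj c)) 0 (by simp) (F.fmap b c))
        1 (by simp) (F.fmap a b)
  map_id : ∀ a : O₁,
    M.pcomp (F.fmap a a) 0 (by simp) (C.idm a) = D.idm (F.obj a)

/-- The identity `M`-enriched functor (data). -/
def MEnrFunData.idFun {M : Multicategory.{u, v}} {O : Type w} (C : MEnrCatData M O) :
    MEnrFunData C C where
  obj a := a
  fmap a b := M.id1 (C.Hom a b)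

/-- Composition of `M`-enriched functors (data). -/
def MEnrFunData.compFun {M : Multicategory.{u, v}} {O₁ : Type w₁} {O₂ : Type w₂}
    {O₃ : Type w₃} {C : MEnrCatData M O₁} {D : MEnrCatData M O₂} {E : MEnrCatData M O₃}
    (F : MEnrFunData C D) (G : MEnrFunData D E) : MEnrFunData C E where
  obj a := G.obj (F.obj a)
  fmap a b := M.pcomp (G.fmap (F.obj a) (F.obj b)) 0 (by simp) (F.fmap a b)

/-- The data of an `M`-enriched natural transformation: components given by
0-morphisms. -/
structure MEnrNatData {M : Multicategory.{u, v}} {O₁ : Type w₁} {O₂ : Type w₂}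
    {C : MEnrCatData M O₁} {D : MEnrCatData M O₂} (F G : MEnrFunData C D) :
    Type (max u v w₁) where
  app : ∀ a : O₁, M.Hom [] (D.Hom (F.obj a) (G.obj a))

/-- The naturality axiom of an `M`-enriched natural transformation. -/
def MEnrNatData.IsEnrNat {M : Multicategory.{u, v}} {O₁ : Type w₁} {O₂ : Type w₂}
    {C : MEnrCatData M O₁} {D : MEnrCatData M O₂} {F G : MEnrFunData C D}
    (α : MEnrNatData F G) : Prop :=
  ∀ a b : O₁,
    M.pcomp (M.pcomp (D.comp (F.obj a) (F.obj b) (G.obj b)) 0 (by simp) (α.app b))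
        0 (by simp) (F.fmap a b) =
      M.pcomp (M.pcomp (D.comp (F.obj a) (G.obj a) (G.obj b)) 1 (by simp) (α.app a))
        0 (by simp) (G.fmap a b)

/-- Vertical composition of `M`-enriched natural transformations (data). -/
def MEnrNatData.vcomp {M : Multicategory.{u, v}} {O₁ : Type w₁} {O₂ : Type w₂}
    {C : MEnrCatData M O₁} {D : MEnrCatData M O₂} {F G H : MEnrFunData C D}
    (β : MEnrNatData G H) (α : MEnrNatData F G) : MEnrNatData F H where
  app a :=
    M.pcomp (M.pcomp (D.comp (F.obj a) (G.obj a) (H.obj a)) 0 (by simp) (β.app a))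
      0 (by simp) (α.app a)

section ChangeOfEnrichment

variable {M N : Multicategory.{u, v}} (F : Multifunctor M N)

/-- Change of enrichment of an enriched category along a multifunctor: same objects,
morphism objects `F(C(a,b))`, composition and identities obtained by applying `F`. -/
def Multifunctor.chCat {O : Type w} (C : MEnrCatData M O) : MEnrCatData N O where
  Hom a b := F.obj (C.Hom a b)
  comp a b c := F.map (C.comp a b c)
  idm a := F.map (C.idm a)

/-- Change of enrichment of an enriched functor along a multifunctor. -/
def Multifunctor.chFun {O₁ : Type w₁} {O₂ : Type w₂} {C : MEnrCatData M O₁}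
    {D : MEnrCatData M O₂} (Φ : MEnrFunData C D) :
    MEnrFunData (F.chCat C) (F.chCat D) where
  obj := Φ.obj
  fmap a b := F.map (Φ.fmap a b)

/-- Change of enrichment of an enriched natural transformation along a
multifunctor. -/
def Multifunctor.chNat {O₁ : Type w₁} {O₂ : Type w₂} {C : MEnrCatData M O₁}
    {D : MEnrCatData M O₂} {Φ Ψ : MEnrFunData C D} (α : MEnrNatData Φ Ψ) :
    MEnrNatData (F.chFun Φ) (F.chFun Ψ) where
  app a := F.map (α.app a)

end ChangeOfEnrichment

/-!
Every axiom of an enriched category, functor or natural transformation, and every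
defining formula of identities and composites, is an equation between partial
composites of structure morphisms. A multifunctor commutes with partial composition,
so applying `F` to such an equation in `M` yields the corresponding equation in `N`.
-/

namespace Multifunctor

variable {M N : Multicategory.{u, v}} (F : Multifunctor M N)

theorem eq_of_map_heq {as : List M.Obj} {b : M.Obj} {x₁ x₂ : M.Hom as b} (h : x₁ = x₂)
    {ds : List N.Obj} {e : N.Obj} {y₁ y₂ : N.Hom ds e}
    (h₁ : F.map x₁ ≍ y₁) (h₂ : F.map x₂ ≍ y₂) : y₁ = y₂ :=
  eq_of_heq (h₁.symm.trans (h ▸ h₂))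

/- For general lists, `F.map (M.pcomp g i hi f)` and `N.pcomp (F.map g) i _ _` have
equal arities only propositionally, hence `≍`; at the concrete arities of enriched
categories both sides have the same type and `eq_of_heq` applies. -/
theorem map_pcomp_heq {bs : List M.Obj} {c : M.Obj} {g : M.Hom bs c} {ds : List N.Obj}
    {G : N.Hom ds (F.obj c)} (hG : F.map g ≍ G) (hds : bs.map F.obj = ds) (i : ℕ)
    (hi : i < bs.length) {as : List M.Obj} {f : M.Hom as (bs.get ⟨i, hi⟩)}
    (hi' : i < ds.length) {f' : N.Hom (as.map F.obj) (ds.get ⟨i, hi'⟩)}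
    (hf : f' ≍ F.map f) : F.map (M.pcomp g i hi f) ≍ N.pcomp G i hi' f' := by
  subst hds
  cases eq_of_heq hG
  exact F.map_pcomp g i hi f hi' f' hf

end Multifunctor

section

variable {M N : Multicategory.{u, v}}

theorem MEnrCatData.IsEnrCat.chCat {O : Type w} {C : MEnrCatData M O} (hC : C.IsEnrCat)
    (F : Multifunctor M N) : (F.chCat C).IsEnrCat where
  assoc a b c d := F.eq_of_map_heq (hC.assoc a b c d)
    (F.map_pcomp _ _ _ _ _ _ .rfl) (F.map_pcomp _ _ _ _ _ _ .rfl)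
  id_comp a b := F.eq_of_map_heq (hC.id_comp a b)
    (F.map_pcomp _ _ _ _ _ _ .rfl) (heq_of_eq (F.map_id _))
  comp_id a b := F.eq_of_map_heq (hC.comp_id a b)
    (F.map_pcomp _ _ _ _ _ _ .rfl) (heq_of_eq (F.map_id _))

theorem MEnrFunData.IsEnrFun.chFun {O₁ : Type w₁} {O₂ : Type w₂} {C : MEnrCatData M O₁}
    {D : MEnrCatData M O₂} {Φ : MEnrFunData C D} (hΦ : Φ.IsEnrFun)
    (F : Multifunctor M N) : (F.chFun Φ).IsEnrFun where
  map_comp a b c := F.eq_of_map_heq (hΦ.map_comp a b c)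
    (F.map_pcomp _ _ _ _ _ _ .rfl)
    (F.map_pcomp_heq (F.map_pcomp _ _ _ _ _ _ .rfl) rfl _ _ _ .rfl)
  map_id a := F.eq_of_map_heq (hΦ.map_id a) (F.map_pcomp _ _ _ _ _ _ .rfl) .rfl

theorem MEnrNatData.IsEnrNat.chNat {O₁ : Type w₁} {O₂ : Type w₂} {C : MEnrCatData M O₁}
    {D : MEnrCatData M O₂} {Φ Ψ : MEnrFunData C D} {α : MEnrNatData Φ Ψ}
    (hα : α.IsEnrNat) (F : Multifunctor M N) : (F.chNat α).IsEnrNat := fun a b =>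
  F.eq_of_map_heq (hα a b)
    (F.map_pcomp_heq (F.map_pcomp _ _ _ _ _ _ .rfl) rfl _ _ _ .rfl)
    (F.map_pcomp_heq (F.map_pcomp _ _ _ _ _ _ .rfl) rfl _ _ _ .rfl)

namespace Multifunctor

variable (F : Multifunctor M N)

theorem chFun_idFun {O : Type w} (C : MEnrCatData M O) :
    F.chFun (MEnrFunData.idFun C) = MEnrFunData.idFun (F.chCat C) :=
  congrArg (MEnrFunData.mk id) (funext₂ fun a b => F.map_id (C.Hom a b))

theorem chFun_compFun {O₁ : Type w₁} {O₂ : Type w₂} {O₃ : Type w₃} {C : MEnrCatData M O₁}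
    {D : MEnrCatData M O₂} {E : MEnrCatData M O₃} (Φ : MEnrFunData C D)
    (Ψ : MEnrFunData D E) : F.chFun (Φ.compFun Ψ) = (F.chFun Φ).compFun (F.chFun Ψ) :=
  congrArg (MEnrFunData.mk (Ψ.obj ∘ Φ.obj))
    (funext₂ fun _ _ => eq_of_heq (F.map_pcomp _ _ _ _ _ _ .rfl))

theorem chNat_vcomp {O₁ : Type w₁} {O₂ : Type w₂} {C : MEnrCatData M O₁}
    {D : MEnrCatData M O₂} {Φ Ψ Θ : MEnrFunData C D} (β : MEnrNatData Ψ Θ)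
    (α : MEnrNatData Φ Ψ) : F.chNat (β.vcomp α) = (F.chNat β).vcomp (F.chNat α) :=
  congrArg MEnrNatData.mk (funext fun _ =>
    eq_of_heq (F.map_pcomp_heq (F.map_pcomp _ _ _ _ _ _ .rfl) rfl _ _ _ .rfl))

end Multifunctor

end

/-- A multifunctor `F : M → N` between multicategories induces a
2-functor `F_• : M-Cat → N-Cat` on the 2-categories of enriched categories, enriched
functors and enriched natural transformations: it sends an `M`-enriched category `C` to
the `N`-enriched category `F_•C` with the same objects and with morphism objects
`(F_•C)(a,b) = F(C(a,b))`, composition and identities obtained by applying `F`; it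
preserves the enriched category/functor/naturality axioms, identities, composition of
enriched functors, and vertical composition of enriched natural transformations. -/
theorem multifunctor_induces_two_functor_on_enriched_categories
    {M N : Multicategory.{u, v}} (F : Multifunctor M N) :
    -- `F_•` sends `M`-enriched categories to `N`-enriched categories …
    (∀ {O : Type w} (C : MEnrCatData M O), C.IsEnrCat → (F.chCat C).IsEnrCat) ∧
    -- … `M`-enriched functors to `N`-enriched functors …
    (∀ {O₁ : Type w₁} {O₂ : Type w₂} {C : MEnrCatData M O₁} {D : MEnrCatData M O₂}
        (Φ : MEnrFunData C D), Φ.IsEnrFun → (F.chFun Φ).IsEnrFun) ∧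
    -- … and `M`-enriched natural transformations to `N`-enriched ones,
    (∀ {O₁ : Type w₁} {O₂ : Type w₂} {C : MEnrCatData M O₁} {D : MEnrCatData M O₂}
        {Φ Ψ : MEnrFunData C D} (α : MEnrNatData Φ Ψ),
        α.IsEnrNat → (F.chNat α).IsEnrNat) ∧
    -- 2-functorially: identities, composition of enriched functors and vertical
    -- composition of enriched natural transformations are preserved.
    (∀ {O : Type w} (C : MEnrCatData M O),
        F.chFun (MEnrFunData.idFun C) = MEnrFunData.idFun (F.chCat C)) ∧
    (∀ {O₁ : Type w₁} {O₂ : Type w₂} {O₃ : Type w₃} {C : MEnrCatData M O₁}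
        {D : MEnrCatData M O₂} {E : MEnrCatData M O₃} (Φ : MEnrFunData C D)
        (Ψ : MEnrFunData D E),
        F.chFun (Φ.compFun Ψ) = (F.chFun Φ).compFun (F.chFun Ψ)) ∧
    (∀ {O₁ : Type w₁} {O₂ : Type w₂} {C : MEnrCatData M O₁} {D : MEnrCatData M O₂}
        {Φ Ψ Θ : MEnrFunData C D} (β : MEnrNatData Ψ Θ) (α : MEnrNatData Φ Ψ),
        F.chNat (β.vcomp α) = (F.chNat β).vcomp (F.chNat α)) :=
  ⟨fun _ hC => hC.chCat F, fun _ hΦ => hΦ.chFun F, fun _ hα => hα.chNat F,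
    F.chFun_idFun, F.chFun_compFun, F.chNat_vcomp⟩
end

section
/- For small permutative categories A, B and C, evaluation is compatible with composition: the two composite trilinear functors (Perm(B,C), Perm(A,B), A) → C given by ev ∘ (∘, id_A) and ev ∘ (id_{Perm(B,C)}, ev) are equal as multilinear functors, i.e., the square relating composition of lax monoidal functors and evaluation commutes in the multicategory of permutative categories. -/
open CategoryTheory MonoidalCategory

universe u v

/-- The data of a permutative (strict symmetric monoidal) structure on a category:
a sum functor `⊕`, a zero object, and a symmetry `γ`. -/
structure PermStruct (C : Type u) [Category.{v} C] where
  add : C → C → C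
  addHom : ∀ {a b c d : C}, (a ⟶ b) → (c ⟶ d) → (add a c ⟶ add b d)
  zero : C
  braid : ∀ a b : C, add a b ⟶ add b a

namespace PermStruct

/-- The axioms making `P` a permutative category: `⊕` is a functor, strictly associative and
unital, and `γ` is a natural symmetry satisfying the hexagon axiom. -/
structure IsPermutative {C : Type u} [Category.{v} C] (P : PermStruct C) : Prop where
  addHom_id : ∀ a b : C, P.addHom (𝟙 a) (𝟙 b) = 𝟙 (P.add a b)
  addHom_comp : ∀ {a b c a' b' c' : C} (f : a ⟶ b) (g : b ⟶ c) (f' : a' ⟶ b') (g' : b' ⟶ c'),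
      P.addHom (f ≫ g) (f' ≫ g') = P.addHom f f' ≫ P.addHom g g'
  add_assoc : ∀ a b c : C, P.add (P.add a b) c = P.add a (P.add b c)
  zero_add : ∀ a : C, P.add P.zero a = a
  add_zero : ∀ a : C, P.add a P.zero = a
  addHom_assoc : ∀ {a b c a' b' c' : C} (f : a ⟶ a') (g : b ⟶ b') (h : c ⟶ c'),
      P.addHom (P.addHom f g) h =
        eqToHom (add_assoc a b c) ≫ P.addHom f (P.addHom g h) ≫ eqToHom (add_assoc a' b' c').symm
  zero_addHom : ∀ {a b : C} (f : a ⟶ b),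
      P.addHom (𝟙 P.zero) f = eqToHom (zero_add a) ≫ f ≫ eqToHom (zero_add b).symm
  addHom_zero : ∀ {a b : C} (f : a ⟶ b),
      P.addHom f (𝟙 P.zero) = eqToHom (add_zero a) ≫ f ≫ eqToHom (add_zero b).symm
  braid_naturality : ∀ {a b c d : C} (f : a ⟶ b) (g : c ⟶ d),
      P.addHom f g ≫ P.braid b d = P.braid a c ≫ P.addHom g f
  braid_braid : ∀ a b : C, P.braid a b ≫ P.braid b a = 𝟙 (P.add a b)
  braid_hexagon : ∀ a b c : C,
      P.braid (P.add a b) c =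
        eqToHom (add_assoc a b c) ≫ P.addHom (𝟙 a) (P.braid b c) ≫
          eqToHom (add_assoc a c b).symm ≫ P.addHom (P.braid a c) (𝟙 b) ≫
          eqToHom (add_assoc c a b)

end PermStruct

/-- A small permutative category. -/
structure PermCat : Type 1 where
  C : Type
  [instCat : SmallCategory C]
  str : PermStruct C
  is : str.IsPermutative

attribute [instance] PermCat.instCat

/-- The "middle four interchange" map `(w ⊕ x) ⊕ (y ⊕ z) ⟶ (w ⊕ y) ⊕ (x ⊕ z)`,
given by `1 ⊕ γ ⊕ 1` (using strict associativity). -/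
def PermCat.midSwap (B : PermCat) (w x y z : B.C) :
    B.str.add (B.str.add w x) (B.str.add y z) ⟶ B.str.add (B.str.add w y) (B.str.add x z) :=
  eqToHom (by rw [B.is.add_assoc w x (B.str.add y z), ← B.is.add_assoc x y z]) ≫
    B.str.addHom (𝟙 w) (B.str.addHom (B.str.braid x y) (𝟙 z)) ≫
    eqToHom (by rw [B.is.add_assoc w y (B.str.add x z), B.is.add_assoc y x z])
/-- A strictly unital lax symmetric monoidal functor between permutative categories:
a functor `f` together with a natural structure morphism
`δ : f a ⊕ f a' ⟶ f (a ⊕ a')` which is strictly unital, associative and compatible with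
the symmetries. -/
structure SULax (A B : PermCat) : Type where
  obj : A.C → B.C
  map : ∀ {a b : A.C}, (a ⟶ b) → (obj a ⟶ obj b)
  map_id : ∀ a : A.C, map (𝟙 a) = 𝟙 (obj a)
  map_comp : ∀ {a b c : A.C} (f : a ⟶ b) (g : b ⟶ c), map (f ≫ g) = map f ≫ map g
  δ : ∀ a a' : A.C, B.str.add (obj a) (obj a') ⟶ obj (A.str.add a a')
  δ_natural : ∀ {a b a' b' : A.C} (f : a ⟶ b) (g : a' ⟶ b'),
      B.str.addHom (map f) (map g) ≫ δ b b' = δ a a' ≫ map (A.str.addHom f g)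
  obj_zero : obj A.str.zero = B.str.zero
  δ_zero_left : ∀ a : A.C,
      δ A.str.zero a = eqToHom (by rw [obj_zero, B.is.zero_add, A.is.zero_add])
  δ_zero_right : ∀ a : A.C,
      δ a A.str.zero = eqToHom (by rw [obj_zero, B.is.add_zero, A.is.add_zero])
  δ_assoc : ∀ a a' a'' : A.C,
      B.str.addHom (𝟙 (obj a)) (δ a' a'') ≫ δ a (A.str.add a' a'') =
        eqToHom (B.is.add_assoc (obj a) (obj a') (obj a'')).symm ≫
          B.str.addHom (δ a a') (𝟙 (obj a'')) ≫ δ (A.str.add a a') a'' ≫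
          eqToHom (congrArg obj (A.is.add_assoc a a' a''))
  δ_braid : ∀ a a' : A.C,
      B.str.braid (obj a) (obj a') ≫ δ a' a = δ a a' ≫ map (A.str.braid a a')

/-- A monoidal natural transformation between strictly unital lax symmetric monoidal
functors. -/
structure MonTrans {A B : PermCat} (f g : SULax A B) : Type where
  app : ∀ a : A.C, f.obj a ⟶ g.obj a
  naturality : ∀ {a b : A.C} (h : a ⟶ b), f.map h ≫ app b = app a ≫ g.map h
  monoidal : ∀ a a' : A.C,
      f.δ a a' ≫ app (A.str.add a a') = B.str.addHom (app a) (app a') ≫ g.δ a a'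
  unital : app A.str.zero = eqToHom (f.obj_zero.trans g.obj_zero.symm)

theorem MonTrans.ext' {A B : PermCat} {f g : SULax A B} :
    ∀ {η θ : MonTrans f g}, (∀ a, η.app a = θ.app a) → η = θ
  | ⟨a₁, _, _, _⟩, ⟨a₂, _, _, _⟩, h => by
      obtain rfl : a₁ = a₂ := funext h
      rfl

/-- The category of strictly unital lax symmetric monoidal functors `A → B` and
monoidal natural transformations. -/
instance SULax.category (A B : PermCat) : SmallCategory (SULax A B) where
  Hom := MonTrans
  id f :=
    { app := fun a => 𝟙 (f.obj a)
      naturality := by intros; simp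
      monoidal := by intro a a'; rw [B.is.addHom_id]; simp
      unital := by simp }
  comp := fun {f g h} η θ =>
    { app := fun a => η.app a ≫ θ.app a
      naturality := by
        intro a b k
        rw [← Category.assoc, η.naturality, Category.assoc, θ.naturality, ← Category.assoc]
      monoidal := by
        intro a a'
        rw [← Category.assoc, η.monoidal, Category.assoc, θ.monoidal, ← Category.assoc,
          ← B.is.addHom_comp]
      unital := by (try dsimp only); rw [η.unital, θ.unital]; simp }
  id_comp := by intros; apply MonTrans.ext'; intros; simp
  comp_id := by intros; apply MonTrans.ext'; intros; simp
  assoc := by intros; apply MonTrans.ext'; intros; simp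

@[simp] theorem MonTrans.id_app {A B : PermCat} (f : SULax A B) (a : A.C) :
    (𝟙 f : MonTrans f f).app a = 𝟙 (f.obj a) := rfl

@[simp] theorem MonTrans.comp_app {A B : PermCat} {f g h : SULax A B}
    (η : f ⟶ g) (θ : g ⟶ h) (a : A.C) :
    (η ≫ θ : MonTrans f h).app a = η.app a ≫ θ.app a := rfl

/-- The identity functor as a strictly unital lax symmetric monoidal functor. -/
def SULax.id (A : PermCat) : SULax A A where
  obj a := a
  map f := f
  map_id _ := rfl
  map_comp _ _ := rfl
  δ a a' := 𝟙 _
  δ_natural _ _ := by simp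
  obj_zero := rfl
  δ_zero_left _ := by simp
  δ_zero_right _ := by simp
  δ_assoc a a' a'' := by simp [A.is.addHom_id]
  δ_braid _ _ := by simp
/-- A bilinear functor `(𝒜, ℬ) → 𝒞` of permutative categories in the sense of
Elmendorf–Mandell: a functor `𝒜 × ℬ → 𝒞` with natural linearity constraints `δ₁, δ₂`,
which vanishes when either input is zero, and whose constraints are strictly unital,
associative, compatible with the symmetries and satisfy the interchange condition. -/
structure Bilinear (𝒜 ℬ 𝒞 : PermCat) : Type where
  obj : 𝒜.C → ℬ.C → 𝒞.C
  map : ∀ {a a' : 𝒜.C} {b b' : ℬ.C}, (a ⟶ a') → (b ⟶ b') → (obj a b ⟶ obj a' b')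
  map_id : ∀ a b, map (𝟙 a) (𝟙 b) = 𝟙 (obj a b)
  map_comp : ∀ {a₁ a₂ a₃ : 𝒜.C} {b₁ b₂ b₃ : ℬ.C}
      (f : a₁ ⟶ a₂) (f' : a₂ ⟶ a₃) (g : b₁ ⟶ b₂) (g' : b₂ ⟶ b₃),
      map (f ≫ f') (g ≫ g') = map f g ≫ map f' g'
  δ₁ : ∀ (a a' : 𝒜.C) (b : ℬ.C), 𝒞.str.add (obj a b) (obj a' b) ⟶ obj (𝒜.str.add a a') b
  δ₂ : ∀ (a : 𝒜.C) (b b' : ℬ.C), 𝒞.str.add (obj a b) (obj a b') ⟶ obj a (ℬ.str.add b b')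
  δ₁_natural : ∀ {a₁ a₂ a₁' a₂' : 𝒜.C} {b b' : ℬ.C} (f : a₁ ⟶ a₂) (f' : a₁' ⟶ a₂') (g : b ⟶ b'),
      𝒞.str.addHom (map f g) (map f' g) ≫ δ₁ a₂ a₂' b' =
        δ₁ a₁ a₁' b ≫ map (𝒜.str.addHom f f') g
  δ₂_natural : ∀ {a a' : 𝒜.C} {b₁ b₂ b₁' b₂' : ℬ.C} (f : a ⟶ a') (g : b₁ ⟶ b₂) (g' : b₁' ⟶ b₂'),
      𝒞.str.addHom (map f g) (map f g') ≫ δ₂ a' b₂ b₂' =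
        δ₂ a b₁ b₁' ≫ map f (ℬ.str.addHom g g')
  obj_zero_left : ∀ b, obj 𝒜.str.zero b = 𝒞.str.zero
  obj_zero_right : ∀ a, obj a ℬ.str.zero = 𝒞.str.zero
  map_zero_left : ∀ {b b' : ℬ.C} (g : b ⟶ b'),
      map (𝟙 𝒜.str.zero) g = eqToHom (by rw [obj_zero_left, obj_zero_left])
  map_zero_right : ∀ {a a' : 𝒜.C} (f : a ⟶ a'),
      map f (𝟙 ℬ.str.zero) = eqToHom (by rw [obj_zero_right, obj_zero_right])
  δ₁_zero₁ : ∀ a' b, δ₁ 𝒜.str.zero a' b =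
      eqToHom (by rw [obj_zero_left, 𝒞.is.zero_add, 𝒜.is.zero_add])
  δ₁_zero₂ : ∀ a b, δ₁ a 𝒜.str.zero b =
      eqToHom (by rw [obj_zero_left, 𝒞.is.add_zero, 𝒜.is.add_zero])
  δ₁_zero₃ : ∀ a a', δ₁ a a' ℬ.str.zero =
      eqToHom (by rw [obj_zero_right, obj_zero_right, obj_zero_right, 𝒞.is.add_zero])
  δ₂_zero₁ : ∀ a b', δ₂ a ℬ.str.zero b' =
      eqToHom (by rw [obj_zero_right, 𝒞.is.zero_add, ℬ.is.zero_add])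
  δ₂_zero₂ : ∀ a b, δ₂ a b ℬ.str.zero =
      eqToHom (by rw [obj_zero_right, 𝒞.is.add_zero, ℬ.is.add_zero])
  δ₂_zero₃ : ∀ b b', δ₂ 𝒜.str.zero b b' =
      eqToHom (by rw [obj_zero_left, obj_zero_left, obj_zero_left, 𝒞.is.add_zero])
  δ₁_assoc : ∀ a a' a'' b,
      𝒞.str.addHom (𝟙 (obj a b)) (δ₁ a' a'' b) ≫ δ₁ a (𝒜.str.add a' a'') b =
        eqToHom (𝒞.is.add_assoc (obj a b) (obj a' b) (obj a'' b)).symm ≫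
          𝒞.str.addHom (δ₁ a a' b) (𝟙 (obj a'' b)) ≫ δ₁ (𝒜.str.add a a') a'' b ≫
          eqToHom (by rw [𝒜.is.add_assoc])
  δ₂_assoc : ∀ a b b' b'',
      𝒞.str.addHom (𝟙 (obj a b)) (δ₂ a b' b'') ≫ δ₂ a b (ℬ.str.add b' b'') =
        eqToHom (𝒞.is.add_assoc (obj a b) (obj a b') (obj a b'')).symm ≫
          𝒞.str.addHom (δ₂ a b b') (𝟙 (obj a b'')) ≫ δ₂ a (ℬ.str.add b b') b'' ≫
          eqToHom (by rw [ℬ.is.add_assoc])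
  δ₁_braid : ∀ a a' b,
      𝒞.str.braid (obj a b) (obj a' b) ≫ δ₁ a' a b =
        δ₁ a a' b ≫ map (𝒜.str.braid a a') (𝟙 b)
  δ₂_braid : ∀ a b b',
      𝒞.str.braid (obj a b) (obj a b') ≫ δ₂ a b' b =
        δ₂ a b b' ≫ map (𝟙 a) (ℬ.str.braid b b')
  interchange : ∀ a a' b b',
      𝒞.str.addHom (δ₁ a a' b) (δ₁ a a' b') ≫ δ₂ (𝒜.str.add a a') b b' =
        𝒞.midSwap (obj a b) (obj a' b) (obj a b') (obj a' b') ≫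
          𝒞.str.addHom (δ₂ a b b') (δ₂ a' b b') ≫ δ₁ a a' (ℬ.str.add b b')
/-- The pointwise-sum permutative structure on the category `Perm(A,B)` of strictly
unital lax symmetric monoidal functors `A → B` and monoidal natural transformations:
`(f ⊕ g)(a) = f(a) ⊕ g(a)`, with structure morphism the composite
`(1 ⊕ γ ⊕ 1) ≫ (δ^f ⊕ δ^g)`, and everything else pointwise. -/
structure PointwiseStr (A B : PermCat) : Type where
  P : PermStruct (SULax A B)
  is : P.IsPermutative
  add_obj : ∀ (f g : SULax A B) (a : A.C), (P.add f g).obj a = B.str.add (f.obj a) (g.obj a)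
  add_δ : ∀ (f g : SULax A B) (a a' : A.C),
      (P.add f g).δ a a' =
        eqToHom (by rw [add_obj, add_obj]) ≫
          B.midSwap (f.obj a) (g.obj a) (f.obj a') (g.obj a') ≫
          B.str.addHom (f.δ a a') (g.δ a a') ≫ eqToHom (add_obj f g (A.str.add a a')).symm
  addHom_app : ∀ {f g f' g' : SULax A B} (η : f ⟶ f') (θ : g ⟶ g') (a : A.C),
      (P.addHom η θ).app a =
        eqToHom (add_obj f g a) ≫ B.str.addHom (η.app a) (θ.app a) ≫
          eqToHom (add_obj f' g' a).symm
  zero_obj : ∀ a : A.C, P.zero.obj a = B.str.zero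
  braid_app : ∀ (f g : SULax A B) (a : A.C),
      (P.braid f g).app a =
        eqToHom (add_obj f g a) ≫ B.str.braid (f.obj a) (g.obj a) ≫
          eqToHom (add_obj g f a).symm

/-- The permutative category `Perm(A,B)`. -/
def PointwiseStr.toPermCat {A B : PermCat} (h : PointwiseStr A B) : PermCat :=
  { C := SULax A B, str := h.P, is := h.is }

/-- The evaluation bilinear functor `ev : (Perm(A,B), A) → B`, `ev(f,a) = f(a)`,
whose first linearity constraint is the identity and whose second linearity constraint
is the structure morphism of `f`. -/
structure EvStr (A B : PermCat) (h : PointwiseStr A B) : Type where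
  bil : Bilinear h.toPermCat A B
  obj_eq : ∀ (f : SULax A B) (a : A.C), bil.obj f a = f.obj a
  map_eq : ∀ {f f' : SULax A B} {a a' : A.C} (η : f ⟶ f') (u : a ⟶ a'),
      bil.map η u =
        eqToHom (obj_eq f a) ≫ f.map u ≫ η.app a' ≫ eqToHom (obj_eq f' a').symm
  δ₁_eq : ∀ (f f' : SULax A B) (a : A.C),
      bil.δ₁ f f' a = eqToHom (by simp only [PointwiseStr.toPermCat]; rw [obj_eq, obj_eq, obj_eq, h.add_obj])
  δ₂_eq : ∀ (f : SULax A B) (a a' : A.C),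
      bil.δ₂ f a a' =
        eqToHom (by rw [obj_eq, obj_eq]) ≫ f.δ a a' ≫ eqToHom (obj_eq f (A.str.add a a')).symm

/-- The composition bilinear functor `∘ : (Perm(B,C), Perm(A,B)) → Perm(A,C)`,
whose first linearity constraint is the identity and whose second linearity constraint
is given by the structure morphism of `g`. -/
structure CompStr (A B C : PermCat)
    (hBC : PointwiseStr B C) (hAB : PointwiseStr A B) (hAC : PointwiseStr A C) : Type where
  bil : Bilinear hBC.toPermCat hAB.toPermCat hAC.toPermCat
  obj_obj : ∀ (g : SULax B C) (f : SULax A B) (a : A.C),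
      (bil.obj g f).obj a = g.obj (f.obj a)
  obj_map : ∀ (g : SULax B C) (f : SULax A B) {a a' : A.C} (u : a ⟶ a'),
      (bil.obj g f).map u =
        eqToHom (obj_obj g f a) ≫ g.map (f.map u) ≫ eqToHom (obj_obj g f a').symm
  obj_δ : ∀ (g : SULax B C) (f : SULax A B) (a a' : A.C),
      (bil.obj g f).δ a a' =
        eqToHom (by rw [obj_obj, obj_obj]) ≫ g.δ (f.obj a) (f.obj a') ≫ g.map (f.δ a a') ≫
          eqToHom (obj_obj g f (A.str.add a a')).symm
  map_app : ∀ {g g' : SULax B C} {f f' : SULax A B} (θ : g ⟶ g') (η : f ⟶ f') (a : A.C),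
      (bil.map θ η).app a =
        eqToHom (obj_obj g f a) ≫ g.map (η.app a) ≫ θ.app (f'.obj a) ≫
          eqToHom (obj_obj g' f' a).symm
  δ₁_app : ∀ (g g' : SULax B C) (f : SULax A B) (a : A.C),
      (bil.δ₁ g g' f).app a =
        eqToHom (by simp only [PointwiseStr.toPermCat]; rw [hAC.add_obj, obj_obj, obj_obj, obj_obj, hBC.add_obj])
  δ₂_app : ∀ (g : SULax B C) (f f' : SULax A B) (a : A.C),
      (bil.δ₂ g f f').app a =
        eqToHom (by simp only [PointwiseStr.toPermCat]; rw [hAC.add_obj, obj_obj, obj_obj]) ≫ g.δ (f.obj a) (f'.obj a) ≫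
          eqToHom (by simp only [PointwiseStr.toPermCat]; rw [obj_obj, hAB.add_obj])

/-!
By the defining formulas of `ev` and `∘`, every structure map of either composite is built from
`g.map`, `g.δ`, `θ.app` and the data of `f`, evaluated at the same objects; the two composites
differ only by the transports along `ev(g ∘ f, a) = g(f(a)) = ev(g, ev(f, a))`, so each identity
comes down to moving these transports through `g.map`, `g.δ` and `θ.app`.
-/

theorem SULax.map_eqToHom {A B : PermCat} (g : SULax A B) {a a' : A.C} (h : a = a') :
    g.map (eqToHom h) = eqToHom (congrArg g.obj h) := by
  subst h; exact g.map_id a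

theorem SULax.δ_congr {A B : PermCat} (g : SULax A B) {a₁ a₂ b₁ b₂ : A.C}
    (h₁ : a₁ = b₁) (h₂ : a₂ = b₂) :
    g.δ a₁ a₂ = eqToHom (by rw [h₁, h₂]) ≫ g.δ b₁ b₂ ≫ eqToHom (by rw [h₁, h₂]) := by
  subst h₁ h₂; simp

theorem MonTrans.app_congr {A B : PermCat} {g g' : SULax A B} (θ : g ⟶ g')
    {a a' : A.C} (h : a = a') :
    θ.app a = eqToHom (congrArg g.obj h) ≫ θ.app a' ≫ eqToHom (congrArg g'.obj h).symm := by
  subst h; simp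

section EvalComp

variable {A B C : PermCat} {hBC : PointwiseStr B C} {hAB : PointwiseStr A B}
  {hAC : PointwiseStr A C} (evAB : EvStr A B hAB) (evBC : EvStr B C hBC) (evAC : EvStr A C hAC)
  (cmp : CompStr A B C hBC hAB hAC)

theorem ev_comp_obj (g : SULax B C) (f : SULax A B) (a : A.C) :
    evAC.bil.obj (cmp.bil.obj g f) a = evBC.bil.obj g (evAB.bil.obj f a) := by
  -- `erw` throughout: the specifications are stated on `SULax`, the bilinear functors on the
  -- non-reducible `PointwiseStr.toPermCat`
  erw [evAC.obj_eq, cmp.obj_obj, evBC.obj_eq, evAB.obj_eq]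

theorem ev_comp_map {g g' : SULax B C} (θ : g ⟶ g') {f f' : SULax A B} (η : f ⟶ f')
    {a a' : A.C} (u : a ⟶ a') :
    evAC.bil.map (cmp.bil.map θ η) u =
      eqToHom (ev_comp_obj evAB evBC evAC cmp g f a) ≫ evBC.bil.map θ (evAB.bil.map η u) ≫
        eqToHom (ev_comp_obj evAB evBC evAC cmp g' f' a').symm := by
  erw [evAC.map_eq, evBC.map_eq, evAB.map_eq, cmp.obj_map, cmp.map_app,
    θ.app_congr (evAB.obj_eq f' a')]
  simp [g.map_comp, g.map_eqToHom]

theorem ev_comp_δ_first (g g' : SULax B C) (f : SULax A B) (a : A.C) :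
    evAC.bil.δ₁ (cmp.bil.obj g f) (cmp.bil.obj g' f) a ≫
        evAC.bil.map (cmp.bil.δ₁ g g' f) (𝟙 a) =
      eqToHom (by rw [ev_comp_obj evAB evBC evAC cmp, ev_comp_obj evAB evBC evAC cmp]) ≫
        evBC.bil.δ₁ g g' (evAB.bil.obj f a) ≫
        eqToHom (ev_comp_obj evAB evBC evAC cmp (hBC.P.add g g') f a).symm := by
  erw [evAC.δ₁_eq, evAC.map_eq, cmp.δ₁_app, evBC.δ₁_eq, SULax.map_id]
  simp only [eqToHom_trans, Category.id_comp, eqToHom_trans_assoc]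
  exact (eqToHom_trans _ _).symm

theorem ev_comp_δ_second (g : SULax B C) (f f' : SULax A B) (a : A.C) :
    evAC.bil.δ₁ (cmp.bil.obj g f) (cmp.bil.obj g f') a ≫
        evAC.bil.map (cmp.bil.δ₂ g f f') (𝟙 a) =
      eqToHom (by rw [ev_comp_obj evAB evBC evAC cmp, ev_comp_obj evAB evBC evAC cmp]) ≫
        evBC.bil.δ₂ g (evAB.bil.obj f a) (evAB.bil.obj f' a) ≫
        evBC.bil.map (𝟙 g) (evAB.bil.δ₁ f f' a) ≫
        eqToHom (ev_comp_obj evAB evBC evAC cmp g (hAB.P.add f f') a).symm := by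
  erw [evAC.δ₁_eq, evAC.map_eq, cmp.δ₂_app, evBC.δ₂_eq, evBC.map_eq, evAB.δ₁_eq, SULax.map_id,
    g.δ_congr (evAB.obj_eq f a) (evAB.obj_eq f' a)]
  simp only [Category.assoc, eqToHom_trans, Category.id_comp, eqToHom_trans_assoc, g.map_eqToHom,
    MonTrans.id_app]
  erw [eqToHom_trans]
  rfl

theorem ev_comp_δ_third (g : SULax B C) (f : SULax A B) (a a' : A.C) :
    evAC.bil.δ₂ (cmp.bil.obj g f) a a' =
      eqToHom (by rw [ev_comp_obj evAB evBC evAC cmp, ev_comp_obj evAB evBC evAC cmp]) ≫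
        evBC.bil.δ₂ g (evAB.bil.obj f a) (evAB.bil.obj f a') ≫
        evBC.bil.map (𝟙 g) (evAB.bil.δ₂ f a a') ≫
        eqToHom (ev_comp_obj evAB evBC evAC cmp g f (A.str.add a a')).symm := by
  erw [evAC.δ₂_eq, cmp.obj_δ, evBC.δ₂_eq, evBC.map_eq, evAB.δ₂_eq,
    g.δ_congr (evAB.obj_eq f a) (evAB.obj_eq f a')]
  simp [g.map_comp, g.map_eqToHom]

end EvalComp

/-- For small permutative categories `A`, `B`, `C`, evaluation is
compatible with composition: the two composite trilinear functors
`(Perm(B,C), Perm(A,B), A) → C` given by `ev ∘ (∘, id_A)` and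
`ev ∘ (id_{Perm(B,C)}, ev)` are equal as multilinear functors — they agree on objects,
on morphisms, and their three linearity constraints coincide. -/
theorem evaluation_compatible_with_composition
    (A B C : PermCat) (hBC : PointwiseStr B C) (hAB : PointwiseStr A B)
    (hAC : PointwiseStr A C)
    (evAB : EvStr A B hAB) (evBC : EvStr B C hBC) (evAC : EvStr A C hAC)
    (cmp : CompStr A B C hBC hAB hAC) :
    ∃ hobj : ∀ (g : SULax B C) (f : SULax A B) (a : A.C),
        evAC.bil.obj (cmp.bil.obj g f) a = evBC.bil.obj g (evAB.bil.obj f a),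
      -- the two composites agree on morphisms
      (∀ {g g' : SULax B C} (θ : g ⟶ g') {f f' : SULax A B} (η : f ⟶ f')
          {a a' : A.C} (u : a ⟶ a'),
        evAC.bil.map (cmp.bil.map θ η) u =
          eqToHom (hobj g f a) ≫ evBC.bil.map θ (evAB.bil.map η u) ≫
            eqToHom (hobj g' f' a').symm) ∧
      -- the linearity constraints in the first variable agree
      (∀ (g g' : SULax B C) (f : SULax A B) (a : A.C),
        evAC.bil.δ₁ (cmp.bil.obj g f) (cmp.bil.obj g' f) a ≫
            evAC.bil.map (cmp.bil.δ₁ g g' f) (𝟙 a) =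
          eqToHom (by rw [hobj, hobj]) ≫ evBC.bil.δ₁ g g' (evAB.bil.obj f a) ≫
            eqToHom (hobj (hBC.P.add g g') f a).symm) ∧
      -- the linearity constraints in the second variable agree
      (∀ (g : SULax B C) (f f' : SULax A B) (a : A.C),
        evAC.bil.δ₁ (cmp.bil.obj g f) (cmp.bil.obj g f') a ≫
            evAC.bil.map (cmp.bil.δ₂ g f f') (𝟙 a) =
          eqToHom (by rw [hobj, hobj]) ≫
            evBC.bil.δ₂ g (evAB.bil.obj f a) (evAB.bil.obj f' a) ≫
            evBC.bil.map (𝟙 g) (evAB.bil.δ₁ f f' a) ≫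
            eqToHom (hobj g (hAB.P.add f f') a).symm) ∧
      -- the linearity constraints in the third variable agree
      (∀ (g : SULax B C) (f : SULax A B) (a a' : A.C),
        evAC.bil.δ₂ (cmp.bil.obj g f) a a' =
          eqToHom (by rw [hobj, hobj]) ≫
            evBC.bil.δ₂ g (evAB.bil.obj f a) (evAB.bil.obj f a') ≫
            evBC.bil.map (𝟙 g) (evAB.bil.δ₂ f a a') ≫
            eqToHom (hobj g f (A.str.add a a')).symm) :=
  ⟨ev_comp_obj evAB evBC evAC cmp, ev_comp_map evAB evBC evAC cmp,
    ev_comp_δ_first evAB evBC evAC cmp, ev_comp_δ_second evAB evBC evAC cmp,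
    ev_comp_δ_third evAB evBC evAC cmp⟩
end
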